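/- arXiv:1809.07656 — 2 statements merged into one kernel-verified Lean document; each statement's English description precedes it below -/
import Mathlib

section
/- Let x₁, …, x_M be M i.i.d. random points sampled from the uniform (equi-)distribution in the unit ball 𝔹ₙ ⊂ ℝⁿ, let 0 < r, ϑ < 1, and set ρ = √(1 − r²). If M < 2(ϑ − rⁿ)/ρⁿ, then P( (xᵢ, x_M) < r ‖x_M‖ for all i = 1, …, M − 1 ) > 1 − ϑ. -/
open MeasureTheory ProbabilityTheory RealInnerProductSpace

/-!
Given `x_M = y ≠ 0`, the event `⟪xᵢ, y⟫ ≥ r ‖y‖` is a cap of the unit ball which, translated by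
`-r y / ‖y‖`, lies in a half ball of radius `ρ = √(1 - r²)`; by symmetry of the ball under
`x ↦ -x` its probability is at most `ρⁿ / 2`. Independence lets us integrate this bound over `y`,
and a union bound over the other `M - 1` points leaves failure probability at most
`M ρⁿ / 2 < ϑ - rⁿ ≤ ϑ`.
-/

open Metric Module
open scoped ENNReal

section HaarCaps

variable {E : Type*} [NormedAddCommGroup E] [InnerProductSpace ℝ E] [FiniteDimensional ℝ E]
  [MeasurableSpace E] [BorelSpace E] (μ : Measure E) [μ.IsAddHaarMeasure]

theorem addHaar_setOf_inner_eq_zero {u : E} (hu : u ≠ 0) : μ {x | ⟪x, u⟫ = 0} = 0 := by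
  have hne : (ℝ ∙ u)ᗮ ≠ ⊤ := fun h ↦ by
    have := Submodule.mem_orthogonal_singleton_iff_inner_left.mp (h ▸ Submodule.mem_top (x := u))
    exact hu (inner_self_eq_zero.mp this)
  convert Measure.addHaar_submodule μ _ hne using 2
  ext x
  exact Submodule.mem_orthogonal_singleton_iff_inner_left.symm

theorem addHaar_closedBall_inter_inner_nonneg {u : E} (hu : u ≠ 0) (ρ : ℝ) :
    μ (closedBall 0 ρ ∩ {x | 0 ≤ ⟪x, u⟫}) = μ (closedBall 0 ρ) / 2 := by
  set A := closedBall (0 : E) ρ ∩ {x | 0 ≤ ⟪x, u⟫}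
  have hA : MeasurableSet A :=
    measurableSet_closedBall.inter (measurableSet_le measurable_const (by fun_prop))
  have hnegA : -A = closedBall 0 ρ ∩ {x | ⟪x, u⟫ ≤ 0} := by
    ext x; simp [A, inner_neg_left]
  have hunion : A ∪ -A = closedBall 0 ρ := by
    rw [hnegA, ← Set.inter_union_distrib_left]
    simp [Set.ext_iff, le_total]
  have hinter : μ (A ∩ -A) = 0 := by
    refine measure_mono_null (fun x hx ↦ ?_) (addHaar_setOf_inner_eq_zero μ hu)
    rw [hnegA] at hx
    exact le_antisymm hx.2.2 hx.1.2
  have := measure_union_add_inter (μ := μ) (-A) hA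
  rw [Set.union_comm, Set.inter_comm, hunion, hinter, add_zero, Measure.measure_neg] at this
  rw [this, ENNReal.eq_div_iff two_ne_zero ENNReal.ofNat_ne_top, two_mul]

theorem addHaar_closedBall_inter_inner_ge_le {u : E} (hu : ‖u‖ = 1) {r : ℝ} (hr : 0 ≤ r) :
    μ (closedBall 0 1 ∩ {x | r ≤ ⟪x, u⟫}) ≤ μ (closedBall 0 √(1 - r ^ 2)) / 2 := by
  have hu0 : u ≠ 0 := norm_ne_zero_iff.mp (by simp [hu])
  have hsub : closedBall 0 1 ∩ {x | r ≤ ⟪x, u⟫} ⊆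
      (· + -(r • u)) ⁻¹' (closedBall 0 √(1 - r ^ 2) ∩ {x | 0 ≤ ⟪x, u⟫}) := by
    rintro x ⟨hx1, hxu⟩
    rw [mem_closedBall_zero_iff] at hx1
    have hxu' : ⟪x - r • u, u⟫ = ⟪x, u⟫ - r := by
      rw [inner_sub_left, real_inner_smul_left, real_inner_self_eq_norm_sq, hu]; ring
    have hnorm : ‖x - r • u‖ ^ 2 ≤ 1 - r ^ 2 := by
      rw [norm_sub_sq_real, real_inner_smul_right, norm_smul, hu, Real.norm_of_nonneg hr]
      nlinarith [norm_nonneg x, mul_le_mul_of_nonneg_left hxu hr]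
    simp only [← sub_eq_add_neg, Set.mem_preimage, Set.mem_inter_iff, mem_closedBall_zero_iff,
      Set.mem_ofPred_eq, hxu', sub_nonneg]
    exact ⟨Real.le_sqrt_of_sq_le hnorm, hxu⟩
  calc μ (closedBall 0 1 ∩ {x | r ≤ ⟪x, u⟫})
      ≤ μ (closedBall 0 √(1 - r ^ 2) ∩ {x | 0 ≤ ⟪x, u⟫}) :=
        (measure_mono hsub).trans_eq (measure_preimage_add_right μ _ _)
    _ = μ (closedBall 0 √(1 - r ^ 2)) / 2 := addHaar_closedBall_inter_inner_nonneg μ hu0 _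

theorem cond_closedBall_setOf_inner_ge_le {y : E} (hy : y ≠ 0) {r : ℝ} (hr : 0 ≤ r) :
    μ[{x | r * ‖y‖ ≤ ⟪x, y⟫} | closedBall 0 1] ≤
      ENNReal.ofReal (√(1 - r ^ 2) ^ finrank ℝ E / 2) := by
  set u := ‖y‖⁻¹ • y
  have hy' : 0 < ‖y‖ := norm_pos_iff.mpr hy
  have hcap : closedBall 0 1 ∩ {x | r * ‖y‖ ≤ ⟪x, y⟫} = closedBall 0 1 ∩ {x | r ≤ ⟪x, u⟫} := by
    ext x
    simp [u, real_inner_smul_right, inv_mul_eq_div, le_div_iff₀ hy']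
  have hB0 : μ (closedBall 0 1) ≠ 0 := (measure_closedBall_pos μ 0 one_pos).ne'
  have hBtop : μ (closedBall 0 1) ≠ ⊤ := measure_closedBall_lt_top.ne
  rw [cond_apply measurableSet_closedBall, hcap, ENNReal.inv_mul_le_iff hB0 hBtop]
  calc μ (closedBall 0 1 ∩ {x | r ≤ ⟪x, u⟫})
      ≤ μ (closedBall 0 √(1 - r ^ 2)) / 2 :=
        addHaar_closedBall_inter_inner_ge_le μ (norm_smul_inv_norm hy) hr
    _ = μ (closedBall 0 1) * ENNReal.ofReal (√(1 - r ^ 2) ^ finrank ℝ E / 2) := by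
        rw [Measure.addHaar_closedBall' μ 0 (Real.sqrt_nonneg _), ENNReal.ofReal_div_of_pos two_pos,
          ENNReal.ofReal_ofNat, mul_comm, mul_div_assoc]

end HaarCaps

namespace ProbabilityTheory

variable {Ω : Type*} [MeasurableSpace Ω] {P : Measure Ω} [IsProbabilityMeasure P]

theorem IndepFun.measure_preimage_le_of_ae_measure_slice_le {α β : Type*} [MeasurableSpace α]
    [MeasurableSpace β] {Y : Ω → α} {X : Ω → β} (hYX : IndepFun Y X P) (hY : AEMeasurable Y P)
    (hX : AEMeasurable X P) {T : Set (α × β)} (hT : MeasurableSet T) {c : ℝ≥0∞}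
    (h : ∀ᵐ y ∂P.map Y, P.map X (Prod.mk y ⁻¹' T) ≤ c) :
    P ((fun ω ↦ (Y ω, X ω)) ⁻¹' T) ≤ c := by
  have hlaw : P.map (fun ω ↦ (Y ω, X ω)) = (P.map Y).prod (P.map X) :=
    (indepFun_iff_map_prod_eq_prod_map_map hY hX).mp hYX
  have := Measure.isProbabilityMeasure_map hY
  calc P ((fun ω ↦ (Y ω, X ω)) ⁻¹' T)
      = ∫⁻ y, P.map X (Prod.mk y ⁻¹' T) ∂P.map Y := by
        rw [← Measure.map_apply_of_aemeasurable (hY.prodMk hX) hT, hlaw, Measure.prod_apply hT]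
    _ ≤ ∫⁻ _, c ∂P.map Y := lintegral_mono_ae h
    _ = c := by simp

theorem one_sub_card_mul_le_toReal_measure_setOf_forall {ι : Type*} [Fintype ι]
    (p : ι → Ω → Prop) {c : ℝ} (hc : 0 ≤ c) (h : ∀ i, P {ω | ¬ p i ω} ≤ ENNReal.ofReal c) :
    1 - Fintype.card ι * c ≤ (P {ω | ∀ i, p i ω}).toReal := by
  have hcompl : {ω | ∀ i, p i ω}ᶜ = ⋃ i, {ω | ¬ p i ω} := by ext; simp
  have hbad : P {ω | ∀ i, p i ω}ᶜ ≤ ENNReal.ofReal (Fintype.card ι * c) :=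
    calc P {ω | ∀ i, p i ω}ᶜ ≤ ∑ i, P {ω | ¬ p i ω} := hcompl ▸ measure_iUnion_fintype_le P _
      _ ≤ ∑ _ : ι, ENNReal.ofReal c := Finset.sum_le_sum fun i _ ↦ h i
      _ = ENNReal.ofReal (Fintype.card ι * c) := by
        rw [Finset.sum_const, nsmul_eq_mul, ENNReal.ofReal_mul (Nat.cast_nonneg _)]
        simp
  have h1 : 1 ≤ P {ω | ∀ i, p i ω} + ENNReal.ofReal (Fintype.card ι * c) :=
    measure_univ (μ := P) ▸ (measure_univ_le_add_compl _).trans (by gcongr)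
  have h2 := ENNReal.toReal_mono (by finiteness) h1
  rw [ENNReal.toReal_add (measure_ne_top _ _) ENNReal.ofReal_ne_top,
    ENNReal.toReal_ofReal (by positivity), ENNReal.toReal_one] at h2
  linarith

variable {E : Type*} [NormedAddCommGroup E] [InnerProductSpace ℝ E] [FiniteDimensional ℝ E]
  [Nontrivial E] [MeasurableSpace E] [BorelSpace E] (μ : Measure E) [μ.IsAddHaarMeasure]

theorem IndepFun.measure_inner_ge_mul_norm_le {X Y : Ω → E} (hYX : IndepFun Y X P)
    (hY : AEMeasurable Y P) (hX : AEMeasurable X P) (hYμ : P.map Y ≪ μ)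
    (hXlaw : P.map X = μ[|closedBall 0 1]) {r : ℝ} (hr : 0 ≤ r) :
    P {ω | r * ‖Y ω‖ ≤ ⟪X ω, Y ω⟫} ≤ ENNReal.ofReal (√(1 - r ^ 2) ^ finrank ℝ E / 2) := by
  have hT : MeasurableSet {p : E × E | r * ‖p.1‖ ≤ ⟪p.2, p.1⟫} :=
    measurableSet_le (by fun_prop) (by fun_prop)
  refine hYX.measure_preimage_le_of_ae_measure_slice_le hY hX hT ?_
  have hY0 : ∀ᵐ y ∂P.map Y, y ≠ 0 := hYμ.ae_le (compl_mem_ae_iff.mpr (measure_singleton 0))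
  filter_upwards [hY0] with y hy
  rw [hXlaw]
  exact cond_closedBall_setOf_inner_ge_le μ hy hr

end ProbabilityTheory

theorem stochastic_separation_last_point_count_bound_general
    (n M : ℕ) (hn : 0 < n) (hM : 0 < M)
    (r ϑ ρ : ℝ) (hr : 0 < r) (hr1 : r < 1)
    (hρ : ρ = Real.sqrt (1 - r ^ 2))
    (hMbound : (M : ℝ) < 2 * (ϑ - r ^ n) / ρ ^ n)
    (Ω : Type*) [MeasurableSpace Ω] (P : Measure Ω) [IsProbabilityMeasure P]
    (X : Fin M → Ω → EuclideanSpace ℝ (Fin n))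
    (hmeas : ∀ i, Measurable (X i))
    (hindep : iIndepFun X P)
    (hdist : ∀ i, Measure.map (X i) P =
      (volume (Metric.closedBall (0 : EuclideanSpace ℝ (Fin n)) 1))⁻¹ •
        volume.restrict (Metric.closedBall (0 : EuclideanSpace ℝ (Fin n)) 1)) :
    (P {ω | ∀ i : Fin M, i ≠ ⟨M - 1, Nat.sub_lt hM Nat.one_pos⟩ →
        ⟪X i ω, X (⟨M - 1, Nat.sub_lt hM Nat.one_pos⟩ : Fin M) ω⟫ <
          r * ‖X (⟨M - 1, Nat.sub_lt hM Nat.one_pos⟩ : Fin M) ω‖}).toReal > 1 - ϑ := by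
  have : Nonempty (Fin n) := ⟨⟨0, hn⟩⟩
  set j : Fin M := ⟨M - 1, Nat.sub_lt hM Nat.one_pos⟩
  have hρn : 0 < ρ ^ n := pow_pos (hρ ▸ Real.sqrt_pos.mpr (by nlinarith)) n
  -- The law in `hdist` is `volume[|closedBall 0 1]` with `ProbabilityTheory.cond` unfolded.
  have hpair (i : Fin M) : P {ω | ¬(i ≠ j → ⟪X i ω, X j ω⟫ < r * ‖X j ω‖)} ≤
      ENNReal.ofReal (ρ ^ n / 2) := by
    by_cases hij : i = j
    · simp [hij]
    · have := (hindep.indepFun (Ne.symm hij)).measure_inner_ge_mul_norm_le volume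
        (hmeas j).aemeasurable (hmeas i).aemeasurable (hdist j ▸ cond_absolutelyContinuous)
        (hdist i) hr.le
      simpa [hij, hρ] using this
  have hgood := one_sub_card_mul_le_toReal_measure_setOf_forall _ (by positivity) hpair
  rw [Fintype.card_fin] at hgood
  rw [lt_div_iff₀ hρn] at hMbound
  nlinarith [pow_pos hr n]

/-- Corollary 1, first part: if `M < 2(ϑ - rⁿ)/ρⁿ`, then with probability `> 1 - ϑ`
the last of `M` i.i.d. points uniform in the unit ball is separated from the others:
`⟪xᵢ, x_M⟫ < r ‖x_M‖` for all `i ≠ M`. -/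
theorem stochastic_separation_last_point_count_bound
    (n M : ℕ) (hn : 0 < n) (hM : 0 < M)
    (r ϑ ρ : ℝ) (hr : 0 < r) (hr1 : r < 1) (hϑ : 0 < ϑ) (hϑ1 : ϑ < 1)
    (hρ : ρ = Real.sqrt (1 - r ^ 2))
    (hMbound : (M : ℝ) < 2 * (ϑ - r ^ n) / ρ ^ n)
    (Ω : Type*) [MeasurableSpace Ω] (P : Measure Ω) [IsProbabilityMeasure P]
    (X : Fin M → Ω → EuclideanSpace ℝ (Fin n))
    (hmeas : ∀ i, Measurable (X i))
    (hindep : iIndepFun X P)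
    (hdist : ∀ i, Measure.map (X i) P =
      (volume (Metric.closedBall (0 : EuclideanSpace ℝ (Fin n)) 1))⁻¹ •
        volume.restrict (Metric.closedBall (0 : EuclideanSpace ℝ (Fin n)) 1)) :
    (P {ω | ∀ i : Fin M, i ≠ ⟨M - 1, Nat.sub_lt hM Nat.one_pos⟩ →
        ⟪X i ω, X (⟨M - 1, Nat.sub_lt hM Nat.one_pos⟩ : Fin M) ω⟫ <
          r * ‖X (⟨M - 1, Nat.sub_lt hM Nat.one_pos⟩ : Fin M) ω‖}).toReal > 1 - ϑ :=
  stochastic_separation_last_point_count_bound_general n M hn hM r ϑ ρ hr hr1 hρ hMbound Ω P X hmeas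
    hindep hdist
end

section
/- Let x₁, …, x_M be M i.i.d. random points sampled from the uniform (equi-)distribution in the unit ball 𝔹ₙ ⊂ ℝⁿ, let 0 < r < 1, and set ρ = √(1 − r²). Then, with probability greater than or equal to 1 − 2M rⁿ − 2M(M − 1) ρⁿ, the points are pairwise ε-orthogonal with ε = r; that is, ‖xⱼ‖ > r for all j and |(xᵢ/‖xᵢ‖, xⱼ/‖xⱼ‖)| ≤ r for all i ≠ j, 1 ≤ i, j ≤ M. -/
open MeasureTheory ProbabilityTheory RealInnerProductSpace Metric Set

/-! The event fails only if some `‖xⱼ‖ ≤ r`, which has probability at most `rⁿ` for each `j`,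
or if for some ordered pair `i ≠ j` the point `xⱼ` lies in the shell `r < ‖y‖ ≤ 1` and in the
double cone `|cos(xᵢ, y)| > r`. That part of the double cone is covered by the two balls of
radius `ρ = √(1 - r²)` centred at `±r xᵢ/‖xᵢ‖`, so by independence, conditionally on `xᵢ`, it
has probability at most `2ρⁿ`. A union bound gives `1 - M rⁿ - 2M(M - 1)ρⁿ`. -/

section Geometry

variable {E : Type*} [NormedAddCommGroup E] [InnerProductSpace ℝ E]

/- With `t = ‖y‖`, `‖y - r u‖² ≤ t² - 2r²t + r²`, and `t² - 2r²t + r² - (1 - r²)` factors as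
`(t - 1) (t - (2r² - 1))`, which is `≤ 0` for `r ≤ t ≤ 1`. -/
theorem norm_sub_smul_le_sqrt_one_sub_sq {u y : E} {r : ℝ} (hu : ‖u‖ ≤ 1) (hr : 0 ≤ r)
    (hry : r ≤ ‖y‖) (hy : ‖y‖ ≤ 1) (h : r * ‖y‖ ≤ ⟪u, y⟫) :
    ‖y - r • u‖ ≤ √(1 - r ^ 2) := by
  have hru : ‖r • u‖ ≤ r := by
    rw [norm_smul, Real.norm_of_nonneg hr]
    exact mul_le_of_le_one_right hr hu
  apply Real.le_sqrt_of_sq_le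
  rw [norm_sub_sq_real, real_inner_smul_right, real_inner_comm]
  nlinarith [mul_le_mul_of_nonneg_left h hr, mul_nonneg (sub_nonneg.2 hy) (sub_nonneg.2 hry),
    mul_nonneg (sub_nonneg.2 hy) (sub_nonneg.2 (hry.trans hy)), norm_nonneg (r • u)]

theorem mem_closedBall_union_of_lt_abs_inner {u y : E} {r : ℝ} (hu : ‖u‖ ≤ 1) (hr : 0 ≤ r)
    (hry : r ≤ ‖y‖) (hy : ‖y‖ ≤ 1) (h : r < |⟪u, ‖y‖⁻¹ • y⟫|) :
    y ∈ closedBall (r • u) √(1 - r ^ 2) ∪ closedBall (-(r • u)) √(1 - r ^ 2) := by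
  have hy0 : 0 < ‖y‖ := by
    refine norm_pos_iff.2 fun hy0 => ?_
    simp only [hy0, smul_zero, inner_zero_right, abs_zero] at h
    linarith
  rw [real_inner_smul_right, abs_mul, abs_inv, abs_norm, inv_mul_eq_div, lt_div_iff₀ hy0,
    lt_abs] at h
  rw [mem_union, mem_closedBall, mem_closedBall, dist_eq_norm, dist_eq_norm, sub_neg_eq_add,
    ← sub_neg_eq_add, ← smul_neg]
  refine h.imp (fun h => ?_) (fun h => ?_)
  · exact norm_sub_smul_le_sqrt_one_sub_sq hu hr hry hy h.le
  · refine norm_sub_smul_le_sqrt_one_sub_sq (by rwa [norm_neg]) hr hry hy ?_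
    rw [inner_neg_left]
    linarith

end Geometry

section UniformBall

variable {E : Type*} [NormedAddCommGroup E] [NormedSpace ℝ E] [FiniteDimensional ℝ E]
  [MeasurableSpace E] [BorelSpace E] (μ : Measure E) [μ.IsAddHaarMeasure]

theorem cond_closedBall_le (x : E) {ρ : ℝ} (hρ : 0 ≤ ρ) :
    μ[closedBall x ρ | closedBall 0 1] ≤ ENNReal.ofReal (ρ ^ Module.finrank ℝ E) := by
  have hB₀ : μ (closedBall 0 1) ≠ 0 := (measure_closedBall_pos μ 0 one_pos).ne'
  have hB : μ (closedBall 0 1) ≠ ⊤ := measure_closedBall_lt_top.ne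
  calc μ[closedBall x ρ | closedBall 0 1]
      ≤ (μ (closedBall 0 1))⁻¹ * μ (closedBall x ρ) := by
        rw [cond_apply measurableSet_closedBall]
        gcongr
        exact inter_subset_right
    _ = ENNReal.ofReal (ρ ^ Module.finrank ℝ E) := by
        rw [μ.addHaar_closedBall' x hρ, mul_comm, mul_assoc, ENNReal.mul_inv_cancel hB₀ hB,
          mul_one]

theorem probReal_norm_le_le {Ω : Type*} [MeasurableSpace Ω] {P : Measure Ω} {X : Ω → E}
    (hX : Measurable X) (hlaw : P.map X = μ[|closedBall 0 1]) {r : ℝ} (hr : 0 ≤ r) :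
    P.real {ω | ‖X ω‖ ≤ r} ≤ r ^ Module.finrank ℝ E := by
  refine ENNReal.toReal_le_of_le_ofReal (by positivity) ?_
  have hpre : {ω | ‖X ω‖ ≤ r} = X ⁻¹' closedBall 0 r := by ext; simp
  rw [hpre, ← Measure.map_apply hX measurableSet_closedBall, hlaw]
  exact cond_closedBall_le μ 0 hr

end UniformBall

theorem ProbabilityTheory.IndepFun.measure_mem_le_of_forall_slice_le {Ω α β : Type*}
    [MeasurableSpace Ω] [MeasurableSpace α] [MeasurableSpace β] {P : Measure Ω}
    [IsProbabilityMeasure P] {X : Ω → α} {Y : Ω → β} (hXY : IndepFun X Y P)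
    (hX : Measurable X) (hY : Measurable Y) {S : Set (α × β)} (hS : MeasurableSet S)
    {c : ENNReal} (hc : ∀ x, P.map Y (Prod.mk x ⁻¹' S) ≤ c) :
    P {ω | (X ω, Y ω) ∈ S} ≤ c := by
  have : IsProbabilityMeasure (P.map X) := Measure.isProbabilityMeasure_map hX.aemeasurable
  calc P {ω | (X ω, Y ω) ∈ S} = (P.map X).prod (P.map Y) S := by
        rw [← (indepFun_iff_map_prod_eq_prod_map_map hX.aemeasurable hY.aemeasurable).1 hXY,
          Measure.map_apply (hX.prodMk hY) hS]
        rfl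
    _ = ∫⁻ x, P.map Y (Prod.mk x ⁻¹' S) ∂P.map X := Measure.prod_apply hS
    _ ≤ ∫⁻ _, c ∂P.map X := lintegral_mono hc
    _ = c := by simp

section ConeCap

variable {E : Type*} [NormedAddCommGroup E] [InnerProductSpace ℝ E] [FiniteDimensional ℝ E]
  [MeasurableSpace E] [BorelSpace E]

theorem cond_setOf_lt_abs_inner_le (μ : Measure E) [μ.IsAddHaarMeasure] {u : E} (hu : ‖u‖ ≤ 1)
    {r : ℝ} (hr : 0 ≤ r) :
    μ[{y | r < ‖y‖ ∧ r < |⟪u, ‖y‖⁻¹ • y⟫|} | closedBall 0 1] ≤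
      ENNReal.ofReal (2 * √(1 - r ^ 2) ^ Module.finrank ℝ E) := by
  set ρ := √(1 - r ^ 2)
  calc μ[{y | r < ‖y‖ ∧ r < |⟪u, ‖y‖⁻¹ • y⟫|} | closedBall 0 1]
      = μ[closedBall 0 1 ∩ {y | r < ‖y‖ ∧ r < |⟪u, ‖y‖⁻¹ • y⟫|} | closedBall 0 1] :=
        (cond_inter_self measurableSet_closedBall _ μ).symm
    _ ≤ μ[closedBall (r • u) ρ ∪ closedBall (-(r • u)) ρ | closedBall 0 1] :=
        measure_mono fun y ⟨hyB, hry, hy⟩ => mem_closedBall_union_of_lt_abs_inner hu hr hry.le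
          (mem_closedBall_zero_iff.1 hyB) hy
    _ ≤ μ[closedBall (r • u) ρ | closedBall 0 1] + μ[closedBall (-(r • u)) ρ | closedBall 0 1] :=
        measure_union_le _ _
    _ ≤ ENNReal.ofReal (ρ ^ Module.finrank ℝ E) + ENNReal.ofReal (ρ ^ Module.finrank ℝ E) :=
        add_le_add (cond_closedBall_le μ _ (Real.sqrt_nonneg _))
          (cond_closedBall_le μ _ (Real.sqrt_nonneg _))
    _ = ENNReal.ofReal (2 * ρ ^ Module.finrank ℝ E) := by
        rw [← ENNReal.ofReal_add (by positivity) (by positivity), two_mul]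

theorem probReal_lt_abs_inner_le {Ω : Type*} [MeasurableSpace Ω] {P : Measure Ω}
    [IsProbabilityMeasure P] (μ : Measure E) [μ.IsAddHaarMeasure] {X Y : Ω → E}
    (hXY : IndepFun X Y P) (hX : Measurable X) (hY : Measurable Y)
    (hlaw : P.map Y = μ[|closedBall 0 1]) {r : ℝ} (hr : 0 ≤ r) :
    P.real {ω | r < ‖Y ω‖ ∧ r < |⟪‖X ω‖⁻¹ • X ω, ‖Y ω‖⁻¹ • Y ω⟫|} ≤
      2 * √(1 - r ^ 2) ^ Module.finrank ℝ E := by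
  refine ENNReal.toReal_le_of_le_ofReal (by positivity) ?_
  refine hXY.measure_mem_le_of_forall_slice_le hX hY
    (S := {p | r < ‖p.2‖ ∧ r < |⟪‖p.1‖⁻¹ • p.1, ‖p.2‖⁻¹ • p.2⟫|}) (by measurability) fun x => ?_
  have hunit : ‖‖x‖⁻¹ • x‖ ≤ 1 := by
    rw [norm_smul, norm_inv, norm_norm]
    exact inv_mul_le_one_of_le₀ le_rfl (norm_nonneg _)
  rw [hlaw]
  exact cond_setOf_lt_abs_inner_le μ hunit hr

end ConeCap

theorem one_sub_le_probReal_quasiorthogonal {Ω ι E : Type*} [MeasurableSpace Ω] [Fintype ι]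
    [NormedAddCommGroup E] [InnerProductSpace ℝ E] {P : Measure Ω} [IsProbabilityMeasure P]
    {X : ι → Ω → E} {r a b : ℝ}
    (hshort : ∀ j, P.real {ω | ‖X j ω‖ ≤ r} ≤ a)
    (hpair : ∀ i j, i ≠ j →
      P.real {ω | r < ‖X j ω‖ ∧ r < |⟪‖X i ω‖⁻¹ • X i ω, ‖X j ω‖⁻¹ • X j ω⟫|} ≤ b) :
    1 - Fintype.card ι * a - Fintype.card ι * (Fintype.card ι - 1) * b ≤
      P.real {ω | (∀ j, r < ‖X j ω‖) ∧
        ∀ i j, i ≠ j → |⟪‖X i ω‖⁻¹ • X i ω, ‖X j ω‖⁻¹ • X j ω⟫| ≤ r} := by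
  classical
  set good := {ω | (∀ j, r < ‖X j ω‖) ∧
    ∀ i j, i ≠ j → |⟪‖X i ω‖⁻¹ • X i ω, ‖X j ω‖⁻¹ • X j ω⟫| ≤ r}
  set bad := fun p : ι × ι => {ω | r < ‖X p.2 ω‖ ∧
    r < |⟪‖X p.1 ω‖⁻¹ • X p.1 ω, ‖X p.2 ω‖⁻¹ • X p.2 ω⟫|}
  have hcover : goodᶜ ⊆ (⋃ j, {ω | ‖X j ω‖ ≤ r}) ∪ ⋃ p ∈ Finset.univ.offDiag, bad p := by
    intro ω hω
    by_cases hlong : ∀ j, r < ‖X j ω‖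
    · obtain ⟨i, j, hij, hcos⟩ : ∃ i j, i ≠ j ∧
          r < |⟪‖X i ω‖⁻¹ • X i ω, ‖X j ω‖⁻¹ • X j ω⟫| := by
        simpa [good, hlong] using hω
      exact Or.inr (mem_iUnion₂.2 ⟨(i, j), by simpa using hij, hlong j, hcos⟩)
    · push Not at hlong
      obtain ⟨j, hj⟩ := hlong
      exact Or.inl (mem_iUnion.2 ⟨j, hj⟩)
  have hbad : P.real goodᶜ ≤
      Fintype.card ι * a + (Fintype.card ι * Fintype.card ι - Fintype.card ι) * b :=
    calc P.real goodᶜ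
        ≤ P.real (⋃ j, {ω | ‖X j ω‖ ≤ r}) + P.real (⋃ p ∈ Finset.univ.offDiag, bad p) :=
          (measureReal_mono hcover).trans (measureReal_union_le _ _)
      _ ≤ ∑ _j : ι, a + ∑ _p ∈ Finset.univ.offDiag, b :=
          add_le_add
            ((measureReal_iUnion_fintype_le _).trans (Finset.sum_le_sum fun j _ => hshort j))
            ((measureReal_biUnion_finset_le _ _).trans (Finset.sum_le_sum fun p hp =>
              hpair p.1 p.2 (Finset.mem_offDiag.1 hp).2.2))
      _ = Fintype.card ι * a + (Fintype.card ι * Fintype.card ι - Fintype.card ι) * b := by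
          simp [Finset.offDiag_card, Nat.cast_sub (Nat.le_mul_self _)]
  have hsplit : 1 ≤ P.real good + P.real goodᶜ := by
    simpa using measureReal_union_le (μ := P) good goodᶜ
  linarith

theorem quasiorthogonality_random_points_ball_general
    (n M : ℕ)
    (r ρ : ℝ) (hr : 0 < r) (hρ : ρ = Real.sqrt (1 - r ^ 2))
    (Ω : Type*) [MeasurableSpace Ω] (P : Measure Ω) [IsProbabilityMeasure P]
    (X : Fin M → Ω → EuclideanSpace ℝ (Fin n))
    (hmeas : ∀ i, Measurable (X i))
    (hindep : iIndepFun X P)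
    (hdist : ∀ i, Measure.map (X i) P =
      (volume (Metric.closedBall (0 : EuclideanSpace ℝ (Fin n)) 1))⁻¹ •
        volume.restrict (Metric.closedBall (0 : EuclideanSpace ℝ (Fin n)) 1)) :
    (P {ω | (∀ j : Fin M, ‖X j ω‖ > r) ∧
        ∀ i j : Fin M, i ≠ j →
          |⟪‖X i ω‖⁻¹ • X i ω, ‖X j ω‖⁻¹ • X j ω⟫| ≤ r}).toReal ≥
      1 - 2 * (M : ℝ) * r ^ n - 2 * (M : ℝ) * ((M : ℝ) - 1) * ρ ^ n := by
  subst hρ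
  have hlaw (i : Fin M) : P.map (X i) = volume[|closedBall 0 1] := hdist i
  have hbound := one_sub_le_probReal_quasiorthogonal (P := P) (r := r)
    (fun j => probReal_norm_le_le volume (hmeas j) (hlaw j) hr.le)
    (fun i j hij => probReal_lt_abs_inner_le volume (hindep.indepFun hij) (hmeas i) (hmeas j)
      (hlaw j) hr.le)
  simp only [finrank_euclideanSpace_fin, Fintype.card_fin] at hbound
  have : 0 ≤ (M : ℝ) * r ^ n := by positivity
  exact le_trans (by linarith) hbound

/-- Quasiorthogonality: `M` i.i.d. points uniform in the unit ball are pairwise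
`ε`-orthogonal with `ε = r` (i.e. `|⟪xᵢ/‖xᵢ‖, xⱼ/‖xⱼ‖⟫| ≤ r` for all `i ≠ j`, and all
norms exceed `r`) with probability at least `1 - 2M rⁿ - 2M(M-1) ρⁿ`, `ρ = √(1-r²)`. -/
theorem quasiorthogonality_random_points_ball
    (n M : ℕ) (hn : 0 < n) (hM : 0 < M)
    (r ρ : ℝ) (hr : 0 < r) (hr1 : r < 1) (hρ : ρ = Real.sqrt (1 - r ^ 2))
    (Ω : Type*) [MeasurableSpace Ω] (P : Measure Ω) [IsProbabilityMeasure P]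
    (X : Fin M → Ω → EuclideanSpace ℝ (Fin n))
    (hmeas : ∀ i, Measurable (X i))
    (hindep : iIndepFun X P)
    (hdist : ∀ i, Measure.map (X i) P =
      (volume (Metric.closedBall (0 : EuclideanSpace ℝ (Fin n)) 1))⁻¹ •
        volume.restrict (Metric.closedBall (0 : EuclideanSpace ℝ (Fin n)) 1)) :
    (P {ω | (∀ j : Fin M, ‖X j ω‖ > r) ∧
        ∀ i j : Fin M, i ≠ j →
          |⟪‖X i ω‖⁻¹ • X i ω, ‖X j ω‖⁻¹ • X j ω⟫| ≤ r}).toReal ≥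
      1 - 2 * (M : ℝ) * r ^ n - 2 * (M : ℝ) * ((M : ℝ) - 1) * ρ ^ n :=
  quasiorthogonality_random_points_ball_general n M r ρ hr hρ Ω P X hmeas hindep hdist
end
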